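/- Let O be a discrete valuation ring with uniformizer ϖ, let n ≥ 1, and let m ≥ 1 be an integer. The set of characteristic polynomials of matrices M ∈ Mₙ(O) with M − Y ∈ ϖ^m·Mₙ(O) is exactly the set of monic polynomials p ∈ O[X] of degree n all of whose coefficients of degree < n lie in ϖ^m·O. -/

import Mathlib

/-!
Reducing modulo `ϖ^m` commutes with taking characteristic polynomials, and `Y` is nilpotent
upper triangular with characteristic polynomial `X^n`; hence every coefficient of `χ(M)` below
the top one vanishes modulo `ϖ^m`. Conversely, a monic `p` of degree `n` is the characteristic
polynomial of its companion matrix, the transposed matrix of multiplication by the root of `p` on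
`O[X]/(p)` and differs from `Y` only by its last row `-p.coeff j`.
-/

/-- The regular nilpotent matrix `Y` with `(i, i+1)`-entries equal to `1` and all
other entries `0`. -/
def Ymat (n : ℕ) (R : Type*) [CommRing R] : Matrix (Fin n) (Fin n) R :=
  fun i j => if (j : ℕ) = (i : ℕ) + 1 then 1 else 0

open Polynomial Matrix

section

variable {R : Type*} [CommRing R]

namespace Polynomial

theorem X_pow_modByMonic_of_lt {p : R[X]} (hp : p.Monic) {k : ℕ} (hk : k < p.natDegree) :
    (X : R[X]) ^ k %ₘ p = X ^ k := by
  nontriviality R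
  rw [modByMonic_eq_self_iff hp, degree_X_pow, degree_eq_natDegree hp.ne_zero]
  exact_mod_cast hk

theorem X_pow_natDegree_modByMonic {p : R[X]} (hp : p.Monic) :
    (X : R[X]) ^ p.natDegree %ₘ p = X ^ p.natDegree - p := by
  nontriviality R
  refine (div_modByMonic_unique 1 _ hp ⟨by ring, degree_sub_lt_right ?_ hp.ne_zero ?_⟩).2
  · rw [degree_X_pow, degree_eq_natDegree hp.ne_zero]
  · rw [leadingCoeff_X_pow, hp.leadingCoeff]

end Polynomial

namespace AdjoinRoot

theorem minpoly_root_of_monic {p : R[X]} (hp : p.Monic) : minpoly R (root p) = p := by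
  refine (minpoly.unique' R _ hp (by rw [aeval_eq, mk_self]) fun q hq => ?_).symm
  rw [aeval_eq, or_iff_not_imp_left]
  exact fun hq0 => mk_ne_zero_of_degree_lt hp hq0 hq

theorem leftMulMatrix_root_apply {p : R[X]} (hp : p.Monic) (i j : Fin (powerBasis' hp).dim) :
    Algebra.leftMulMatrix (powerBasis' hp).basis (root p) i j =
      (X ^ ((j : ℕ) + 1) %ₘ p).coeff i := by
  rw [Algebra.leftMulMatrix_eq_repr_mul, PowerBasis.basis_eq_pow, powerBasis'_gen, ← pow_succ',
    ← mk_X, ← map_pow]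
  exact congrArg (coeff · i) (modByMonicHom_mk hp _)

end AdjoinRoot

namespace Matrix

theorem charpoly_Ymat (n : ℕ) : (Ymat n R).charpoly = X ^ n := by
  rw [charpoly_of_isUpperTriangular]
  · simp [Ymat]
  · intro i j (hij : j < i)
    exact if_neg (by rw [Fin.lt_def] at hij; omega)

theorem charpoly_coeff_sub_mem_of_sub_mem {ι : Type*} [Fintype ι] [DecidableEq ι] {I : Ideal R}
    {M N : Matrix ι ι R} (h : ∀ i j, (M - N) i j ∈ I) (k : ℕ) :
    M.charpoly.coeff k - N.charpoly.coeff k ∈ I := by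
  have hMN : M.map (Ideal.Quotient.mk I) = N.map (Ideal.Quotient.mk I) :=
    ext fun i j => Ideal.Quotient.eq.2 (h i j)
  have := congrArg (fun q => q.coeff k) (congrArg charpoly hMN)
  simp only [charpoly_map, coeff_map] at this
  exact Ideal.Quotient.eq.1 this

def companion (p : R[X]) : Matrix (Fin p.natDegree) (Fin p.natDegree) R :=
  Ymat p.natDegree R +
    of fun (i j : Fin p.natDegree) => if (i : ℕ) + 1 = p.natDegree then -p.coeff j else 0

theorem companion_sub_Ymat_apply (p : R[X]) (i j : Fin p.natDegree) :
    (companion p - Ymat p.natDegree R) i j =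
      if (i : ℕ) + 1 = p.natDegree then -p.coeff j else 0 := by
  simp [companion]

theorem companion_apply_eq_coeff_X_pow_modByMonic {p : R[X]} (hp : p.Monic)
    (i j : Fin p.natDegree) : companion p i j = (X ^ ((i : ℕ) + 1) %ₘ p).coeff j := by
  obtain hi | hi := (show (i : ℕ) + 1 ≤ p.natDegree from i.isLt).lt_or_eq
  · rw [X_pow_modByMonic_of_lt hp hi]
    simp [companion, Ymat, coeff_X_pow, hi.ne]
  · rw [hi, X_pow_natDegree_modByMonic hp]
    simp [companion, Ymat, coeff_X_pow, hi, j.isLt.ne]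

theorem transpose_leftMulMatrix_root_eq_companion {p : R[X]} (hp : p.Monic) :
    (Algebra.leftMulMatrix (AdjoinRoot.powerBasis' hp).basis (AdjoinRoot.root p))ᵀ =
      companion p := by
  ext i j
  exact (AdjoinRoot.leftMulMatrix_root_apply hp j i).trans
    (companion_apply_eq_coeff_X_pow_modByMonic hp i j).symm

theorem charpoly_companion {p : R[X]} (hp : p.Monic) : (companion p).charpoly = p := by
  have h := charpoly_leftMulMatrix (AdjoinRoot.powerBasis' hp)
  rw [AdjoinRoot.powerBasis'_gen, AdjoinRoot.minpoly_root_of_monic hp, ← charpoly_transpose,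
    transpose_leftMulMatrix_root_eq_companion] at h
  exact h

end Matrix

end

theorem stmt7_general {O : Type*} [CommRing O] [IsDomain O]
    (ϖ : O)
    (n : ℕ) (m : ℕ) (p : Polynomial O) :
    (∃ M : Matrix (Fin n) (Fin n) O,
        (∀ i j : Fin n, ϖ ^ m ∣ (M - Ymat n O) i j) ∧ M.charpoly = p) ↔
      (p.Monic ∧ p.natDegree = n ∧ ∀ i < n, ϖ ^ m ∣ p.coeff i) := by
  constructor
  · rintro ⟨M, hM, rfl⟩
    refine ⟨M.charpoly_monic, M.charpoly_natDegree_eq_dim.trans (Fintype.card_fin n),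
      fun k hk => ?_⟩
    have hcongr := charpoly_coeff_sub_mem_of_sub_mem
      (fun i j => Ideal.mem_span_singleton.2 (hM i j)) k
    rwa [charpoly_Ymat, coeff_X_pow, if_neg hk.ne, sub_zero, Ideal.mem_span_singleton] at hcongr
  · rintro ⟨hp, rfl, hcoeff⟩
    refine ⟨companion p, fun i j => ?_, charpoly_companion hp⟩
    rw [companion_sub_Ymat_apply]
    split_ifs
    exacts [dvd_neg.2 (hcoeff j j.isLt), dvd_zero _]

/-- Let `O` be a discrete valuation ring with uniformizer `ϖ`, let
`n ≥ 1` and `m ≥ 1`. A polynomial `p ∈ O[X]` is the characteristic polynomial of some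
`M ∈ Mₙ(O)` with `M - Y ∈ ϖ^m·Mₙ(O)` if and only if `p` is monic of degree `n` and all
its coefficients of degree `< n` lie in `ϖ^m·O`. -/
theorem stmt7 {O : Type*} [CommRing O] [IsDomain O] [IsDiscreteValuationRing O]
    (ϖ : O) (hϖ : Irreducible ϖ)
    (n : ℕ) (hn : 1 ≤ n) (m : ℕ) (hm : 1 ≤ m) (p : Polynomial O) :
    (∃ M : Matrix (Fin n) (Fin n) O,
        (∀ i j : Fin n, ϖ ^ m ∣ (M - Ymat n O) i j) ∧ M.charpoly = p) ↔
      (p.Monic ∧ p.natDegree = n ∧ ∀ i < n, ϖ ^ m ∣ p.coeff i) :=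
  stmt7_general ϖ n m p
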